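/- In the Densest-k-Subgraph reduction instance: for every natural number k with 1 <= k <= n, the maximum of QU(H) over all H contained in V with |H| <= k equals the maximum of QU(H) over all H contained in V with |H| = k; i.e., there exists an optimal design that annotates exactly k non-leaf concepts. -/

import Mathlib

/-!
A design can only gain singletons when vertices are added: the trace of a leaf on `H ⊆ H'` is its
trace on `H'` cut down to `H`, so a collision of traces on `H'` would already be one on `H`. Since
`m log n ≥ 1`, `QU` is increasing in `σ`, hence monotone in `H`, and every design of size at most
`k` is dominated by any of its extensions to size `k`.
-/

open scoped Classical BigOperators

namespace DkSReduction

variable {V : Type} [Fintype V] [DecidableEq V]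

/-- The leaf concepts of the Densest-k-Subgraph reduction instance:
the disjoint union of the vertices and the edges of `G`. -/
abbrev Leaf (G : SimpleGraph V) [DecidableRel G.Adj] : Type :=
  V ⊕ {e : Sym2 V // e ∈ G.edgeFinset}

/-- The trace of a leaf `l` w.r.t. a design `H ⊆ V`: the vertices of `H` equal to
`l` (if `l` is a vertex), resp. the endpoints of `l` lying in `H` (if `l` is an
edge). -/
noncomputable def tau (G : SimpleGraph V) [DecidableRel G.Adj] (H : Finset V) :
    Leaf G → Finset V
  | Sum.inl v => H.filter (fun w => w = v)
  | Sum.inr e => H.filter (fun w => w ∈ e.val)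

/-- A leaf is a singleton for `H` if its trace is nonempty and no other leaf has
the same trace. -/
def IsSingleton (G : SimpleGraph V) [DecidableRel G.Adj] (H : Finset V)
    (l : Leaf G) : Prop :=
  (tau G H l).Nonempty ∧ ∀ l' : Leaf G, l' ≠ l → tau G H l' ≠ tau G H l

/-- The number of singleton leaves for `H`. -/
noncomputable def sigma (G : SimpleGraph V) [DecidableRel G.Adj] (H : Finset V) : ℕ :=
  (Finset.univ.filter (IsSingleton G H)).card

/-- The queriability of a design `H ⊆ V` in the reduction instance:
`QU(H) = u*d*( σ(H)*m*log n + (n + m - σ(H)) )`. -/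
noncomputable def QU (G : SimpleGraph V) [DecidableRel G.Adj] (u d : ℝ)
    (H : Finset V) : ℝ :=
  u * d * ((sigma G H : ℝ) * (G.edgeFinset.card : ℝ) * Real.log (Fintype.card V : ℝ)
      + ((Fintype.card V : ℝ) + (G.edgeFinset.card : ℝ) - (sigma G H : ℝ)))

section Monotonicity

variable (G : SimpleGraph V) [DecidableRel G.Adj] {H H' : Finset V}

lemma tau_eq_inter_of_subset (hs : H ⊆ H') (l : Leaf G) :
    tau G H l = tau G H' l ∩ H := by
  ext w
  cases l <;> simp only [tau, Finset.mem_filter, Finset.mem_inter] <;>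
    exact ⟨fun h => ⟨⟨hs h.1, h.2⟩, h.1⟩, fun h => ⟨h.2, h.1.2⟩⟩

lemma IsSingleton.mono (hs : H ⊆ H') {l : Leaf G} (hl : IsSingleton G H l) :
    IsSingleton G H' l := by
  obtain ⟨hne, huniq⟩ := hl
  refine ⟨hne.mono ?_, fun l' hl' heq => huniq l' hl' ?_⟩
  · rw [tau_eq_inter_of_subset G hs]
    exact Finset.inter_subset_left
  · rw [tau_eq_inter_of_subset G hs, tau_eq_inter_of_subset G hs l, heq]

lemma sigma_mono : Monotone (sigma G) := fun _ _ hs =>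
  Finset.card_le_card <| Finset.monotone_filter_right _ fun _ _ => IsSingleton.mono G hs

lemma QU_eq (u d : ℝ) (H : Finset V) :
    QU G u d H = u * d * (Fintype.card V + G.edgeFinset.card)
      + u * d * (G.edgeFinset.card * Real.log (Fintype.card V) - 1) * sigma G H := by
  unfold QU
  ring

lemma QU_mono {u d : ℝ} (hu : 0 < u) (hd : 0 < d)
    (hml : 1 ≤ (G.edgeFinset.card : ℝ) * Real.log (Fintype.card V : ℝ)) :
    Monotone (QU G u d) := by
  intro H H' hs
  rw [QU_eq, QU_eq]
  have := sub_nonneg.mpr hml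
  gcongr
  exact sigma_mono G hs

end Monotonicity

end DkSReduction

lemma Monotone.exists_card_eq_forall_card_le {α β : Type*} [Fintype α] [LinearOrder β]
    {f : Finset α → β} (hf : Monotone f) {k : ℕ} (hk : k ≤ Fintype.card α) :
    ∃ s : Finset α, s.card = k ∧ ∀ t : Finset α, t.card ≤ k → f t ≤ f s := by
  have hne : (Finset.univ.powersetCard k).Nonempty := Finset.powersetCard_nonempty.mpr hk
  obtain ⟨s, hs, hmax⟩ := Finset.exists_max_image _ f hne
  refine ⟨s, Finset.mem_powersetCard_univ.mp hs, fun t ht => ?_⟩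
  obtain ⟨t', htt', ht'⟩ := Finset.exists_superset_card_eq ht hk
  exact (hf htt').trans (hmax t' (Finset.mem_powersetCard_univ.mpr ht'))

open DkSReduction

theorem exists_optimal_design_of_card_eq_general {V : Type} [Fintype V] [DecidableEq V]
    (G : SimpleGraph V) [DecidableRel G.Adj]
    (u d : ℝ) (hu : 0 < u) (hd : 0 < d)
    (hml : 1 ≤ (G.edgeFinset.card : ℝ) * Real.log (Fintype.card V : ℝ))
    (k : ℕ) (hkn : k ≤ Fintype.card V) :
    ∃ H' : Finset V, H'.card = k ∧
      ∀ H : Finset V, H.card ≤ k → QU G u d H ≤ QU G u d H' :=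
  (QU_mono G hu hd hml).exists_card_eq_forall_card_le hkn

/-- In the Densest-k-Subgraph reduction instance, for every
`1 ≤ k ≤ n` the maximum of `QU` over designs of size at most `k` is attained by a
design of size exactly `k`: there exists an optimal design annotating exactly `k`
non-leaf concepts. -/
theorem exists_optimal_design_of_card_eq {V : Type} [Fintype V] [DecidableEq V]
    (G : SimpleGraph V) [DecidableRel G.Adj]
    (hn : 2 ≤ Fintype.card V) (u d : ℝ) (hu : 0 < u) (hd : 0 < d)
    (hml : 1 ≤ (G.edgeFinset.card : ℝ) * Real.log (Fintype.card V : ℝ))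
    (k : ℕ) (hk1 : 1 ≤ k) (hkn : k ≤ Fintype.card V) :
    ∃ H' : Finset V, H'.card = k ∧
      ∀ H : Finset V, H.card ≤ k → QU G u d H ≤ QU G u d H' :=
  exists_optimal_design_of_card_eq_general G u d hu hd hml k hkn
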